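/- In type A₄ (W = S₅, G = GL₅ analog), the element x = s₂s₃s₄s₁s₂s₃ is convex: Φ(x) = ∅ and for all positive roots α, β with α+β positive, n_{x^{±1}}(α+β) ≤ max{n_{x^{±1}}(α), n_{x^{±1}}(β)}. Moreover ℓ(x) = 6, whereas every good position element in the Coxeter conjugacy class of W has length 4 or 8; hence x is convex but not a cyclic shift of any good position element. -/
import Mathlib


open Pointwise

/-- minimal `k ≥ 1` with `x^k (e_i - e_j)` negative (type `A₄` model). -/
noncomputable def nA (x : Equiv.Perm (Fin 5)) (i j : Fin 5) : ℕ :=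
  sInf {k : ℕ | 1 ≤ k ∧ (x ^ k) j < (x ^ k) i}

/-- `Φ(x)` in the type `A` model. -/
def PhiXA (x : Equiv.Perm (Fin 5)) : Set (Fin 5 × Fin 5) :=
  {p | p.1 ≠ p.2 ∧ ∀ k : ℤ, ((x ^ k) p.1 < (x ^ k) p.2 ↔ p.1 < p.2)}

/-- the root `e_{p.1} - e_{p.2}` lies in `ℤJ`. -/
def InZJ (J : Set ℕ) (p : Fin 5 × Fin 5) : Prop :=
  ∀ l : ℕ, min p.1.val p.2.val ≤ l → l < max p.1.val p.2.val → l ∈ J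

/-- quasi-convexity in the type `A` model. -/
noncomputable def QuasiConvexA (x : Equiv.Perm (Fin 5)) : Prop :=
  (∃ J : Set ℕ, PhiXA x = {p | p.1 ≠ p.2 ∧ InZJ J p}) ∧
  ∀ i j k : Fin 5, i < j → j < k →
    (i, j) ∉ PhiXA x → (j, k) ∉ PhiXA x → (i, k) ∉ PhiXA x →
    nA x i k ≤ max (nA x i j) (nA x j k)

/-- convexity: both `x` and `x⁻¹` are quasi-convex. -/
noncomputable def ConvexA (x : Equiv.Perm (Fin 5)) : Prop :=
  QuasiConvexA x ∧ QuasiConvexA x⁻¹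

/-- Coxeter length = number of inversions. -/
def lenA (y : Equiv.Perm (Fin 5)) : ℕ :=
  (Finset.univ.filter fun p : Fin 5 × Fin 5 => p.1 < p.2 ∧ y p.2 < y p.1).card

/-- `V_y^θ` inside the sum-zero reflection representation of `S₅`. -/
noncomputable def Vth5 (y : Equiv.Perm (Fin 5)) (θ : ℝ) : Set (Fin 5 → ℝ) :=
  {v | (∑ i, v i) = 0 ∧
    (fun i => v (y.symm i)) + (fun i => v (y i)) = (2 * Real.cos θ) • v}

/-- sum of the subspaces `V_y^θ` over a list of angles. -/
noncomputable def sumSets (y : Equiv.Perm (Fin 5)) (l : List ℝ) : Set (Fin 5 → ℝ) :=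
  l.foldr (fun θ S => Vth5 y θ + S) {0}

/-- the closed dominant chamber of type `A₄`. -/
def Dom5 (e : Fin 5 → ℝ) : Prop := ∀ a b : Fin 5, a ≤ b → e b ≤ e a

/-- `e` is a `Φ`-regular point of `S`. -/
def Reg5 (S : Set (Fin 5 → ℝ)) (e : Fin 5 → ℝ) : Prop :=
  e ∈ S ∧ ∀ a b : Fin 5, e a = e b → ∀ v ∈ S, v a = v b

/-- `(V^y)^⊥`: sum-zero vectors orthogonal to all `y`-fixed sum-zero vectors. -/
def Vperp (y : Equiv.Perm (Fin 5)) : Set (Fin 5 → ℝ) :=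
  {v | (∑ i, v i) = 0 ∧ ∀ w : Fin 5 → ℝ, (∑ i, w i) = 0 →
    (fun i => w (y.symm i)) = w → (∑ i, v i * w i) = 0}

/-- `l` is a `Φ`-admissible sequence for `y`. -/
noncomputable def Admissible (y : Equiv.Perm (Fin 5)) (l : List ℝ) : Prop :=
  (∀ θ ∈ l, 0 < θ ∧ θ ≤ Real.pi) ∧
  ∃ e, e ∈ sumSets y l ∧ Reg5 (Vperp y) e

/-- `y` is at good position with respect to `(Φ⁺, l)`. -/
noncomputable def GoodPosList (y : Equiv.Perm (Fin 5)) (l : List ℝ) : Prop :=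
  ∀ k : ℕ, 1 ≤ k → k ≤ l.length → ∃ e, Dom5 e ∧ Reg5 (sumSets y (l.take k)) e

/-- `y` is a good position element. -/
noncomputable def GoodPosElem (y : Equiv.Perm (Fin 5)) : Prop :=
  ∃ l : List ℝ, Admissible y l ∧ GoodPosList y l

/-- the simple reflections of `S₅`. -/
def sref (i : Fin 4) : Equiv.Perm (Fin 5) := Equiv.swap i.castSucc i.succ

/-- one step of length-nonincreasing conjugation by a simple reflection. -/
noncomputable def StepTo (a b : Equiv.Perm (Fin 5)) : Prop :=
  ∃ i : Fin 4, b = sref i * a * sref i ∧ lenA b ≤ lenA a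


def fA (c p q : ℝ) : Fin 5 → ℝ := fun t =>
  if t = 0 then p else if t = 1 then q else if t = 2 then 2*c*q - p
  else if t = 3 then -(2*c*p) - 2*c*q else 2*c*p - q


lemma fA0 (c p q : ℝ) : fA c p q 0 = p := rfl
lemma fA1 (c p q : ℝ) : fA c p q 1 = q := rfl
lemma fA2 (c p q : ℝ) : fA c p q 2 = 2*c*q - p := rfl
lemma fA3 (c p q : ℝ) : fA c p q 3 = -(2*c*p) - 2*c*q := rfl
lemma fA4 (c p q : ℝ) : fA c p q 4 = 2*c*p - q := rfl

lemma Vth5_rec {y : Equiv.Perm (Fin 5)} {θ : ℝ} {v : Fin 5 → ℝ}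
    (hv : v ∈ Vth5 y θ) {i j k : Fin 5} (hij : y i = j) (hjk : y j = k) :
    v i + v k = 2 * Real.cos θ * v j := by
  have h := congrFun hv.2 j
  simp only [Pi.add_apply, Pi.smul_apply, smul_eq_mul] at h
  rw [← hij, Equiv.symm_apply_apply, hij, hjk] at h
  exact h

lemma add_singleton_zero (S : Set (Fin 5 → ℝ)) : S + ({0} : Set (Fin 5 → ℝ)) = S := by
  ext v; simp [Set.mem_add]

lemma singleton_zero_add (S : Set (Fin 5 → ℝ)) : ({0} : Set (Fin 5 → ℝ)) + S = S := by
  ext v; simp [Set.mem_add]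

lemma sumSets_trivial (y : Equiv.Perm (Fin 5)) :
    ∀ l : List ℝ, (∀ θ ∈ l, Vth5 y θ = {0}) → sumSets y l = {0} := by
  intro l
  induction l with
  | nil => intro _; rfl
  | cons θ0 l ih =>
    intro h
    have : sumSets y (θ0 :: l) = Vth5 y θ0 + sumSets y l := rfl
    rw [this, h θ0 (by simp), ih (fun θ hθ => h θ (by simp [hθ])), singleton_zero_add]

lemma prefix_lemma (y : Equiv.Perm (Fin 5)) :
    ∀ l : List ℝ, (∃ θ ∈ l, Vth5 y θ ≠ {0}) →
    ∃ k θ, 1 ≤ k ∧ k ≤ l.length ∧ Vth5 y θ ≠ {0} ∧ sumSets y (l.take k) = Vth5 y θ := by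
  intro l
  induction l with
  | nil => rintro ⟨θ, h, _⟩; simp at h
  | cons θ0 l ih =>
    rintro ⟨θ, hθl, hne⟩
    by_cases h0 : Vth5 y θ0 = {0}
    · have hex : ∃ θ ∈ l, Vth5 y θ ≠ {0} := by
        rcases List.mem_cons.1 hθl with h | h
        · exact absurd (h ▸ h0) hne
        · exact ⟨θ, h, hne⟩
      obtain ⟨k, θ', h1, h2, h3, h4⟩ := ih hex
      refine ⟨k+1, θ', by omega, by simpa using h2, h3, ?_⟩
      rw [List.take_succ_cons]
      show Vth5 y θ0 + sumSets y (l.take k) = _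
      rw [h0, singleton_zero_add, h4]
    · refine ⟨1, θ0, le_refl 1, by simp, h0, ?_⟩
      show Vth5 y θ0 + sumSets y ([] : List ℝ) = _
      show Vth5 y θ0 + ({0} : Set (Fin 5 → ℝ)) = _
      rw [add_singleton_zero]

set_option maxHeartbeats 1000000 in
lemma core (y : Equiv.Perm (Fin 5)) (a : Fin 5 → Fin 5) (hinj : Function.Injective a)
    (h0 : y (a 0) = a 1) (h1 : y (a 1) = a 2) (h2 : y (a 2) = a 3)
    (h3 : y (a 3) = a 4) (h4 : y (a 4) = a 0)
    (hg : GoodPosElem y) :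
    ∃ c p q : ℝ, 4*c^2 + 2*c - 1 = 0 ∧
      ∀ s t : Fin 5, a s < a t → fA c p q t < fA c p q s := by
  obtain ⟨l, ⟨hang, estar, hestar, hreg⟩, hgpl⟩ := hg
  have hbij : Function.Bijective a := ⟨hinj, Finite.injective_iff_surjective.mp hinj⟩
  have hsum5 : ∀ F : Fin 5 → ℝ,
      (∑ i, F i) = F (a 0) + F (a 1) + F (a 2) + F (a 3) + F (a 4) := by
    intro F
    rw [← Fintype.sum_bijective a hbij (fun t => F (a t)) F (fun t => rfl),
      Fin.sum_univ_five]
  have hsymm0 : y.symm (a 0) = a 4 := by rw [← h4, Equiv.symm_apply_apply]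
  have hsymm1 : y.symm (a 1) = a 0 := by rw [← h0, Equiv.symm_apply_apply]
  have hsymm2 : y.symm (a 2) = a 1 := by rw [← h1, Equiv.symm_apply_apply]
  have hsymm3 : y.symm (a 3) = a 2 := by rw [← h2, Equiv.symm_apply_apply]
  have hsymm4 : y.symm (a 4) = a 3 := by rw [← h3, Equiv.symm_apply_apply]
  have hwzero : ∀ w : Fin 5 → ℝ, (∑ i, w i) = 0 → (fun i => w (y.symm i)) = w → w = 0 := by
    intro w hws hwsym
    have c0 := congrFun hwsym (a 1); rw [hsymm1] at c0
    have c1 := congrFun hwsym (a 2); rw [hsymm2] at c1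
    have c2 := congrFun hwsym (a 3); rw [hsymm3] at c2
    have c3 := congrFun hwsym (a 4); rw [hsymm4] at c3
    have h5 := (hsum5 w).symm.trans hws
    have hz0 : w (a 0) = 0 := by linarith
    have hz1 : w (a 1) = 0 := c0.symm.trans hz0
    have hz2 : w (a 2) = 0 := c1.symm.trans hz1
    have hz3 : w (a 3) = 0 := c2.symm.trans hz2
    have hz4 : w (a 4) = 0 := c3.symm.trans hz3
    funext i
    obtain ⟨t, rfl⟩ := hbij.2 i
    fin_cases t
    · exact hz0
    · exact hz1
    · exact hz2
    · exact hz3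
    · exact hz4
  have hdelta : (fun i : Fin 5 => if i = 0 then (1:ℝ) else if i = 1 then -1 else 0) ∈ Vperp y := by
    constructor
    · simp [Fin.sum_univ_five]
    · intro w hws hwsym
      rw [hwzero w hws hwsym]
      simp
  have hestar_ne : estar ≠ 0 := by
    intro h
    have := hreg.2 0 1 (by rw [h]; rfl) _ hdelta
    norm_num at this
  have hnt : ∃ θ ∈ l, Vth5 y θ ≠ {0} := by
    by_contra h
    push_neg at h
    rw [sumSets_trivial y l h] at hestar
    exact hestar_ne hestar
  obtain ⟨k, θ, hk1, hk2, hVne, hSeq⟩ := prefix_lemma y l hnt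
  obtain ⟨e, hdom, hregV⟩ := hgpl k hk1 hk2
  rw [hSeq] at hregV
  have h0V : (0 : Fin 5 → ℝ) ∈ Vth5 y θ := ⟨by simp, by funext i; simp⟩
  have hvex : ∃ v ∈ Vth5 y θ, v ≠ 0 := by
    by_contra h
    push_neg at h
    exact hVne (Set.eq_singleton_iff_unique_mem.2 ⟨h0V, fun v hv => h v hv⟩)
  obtain ⟨v, hvV, hv0⟩ := hvex
  have r0 := Vth5_rec hvV h4 h0
  have r1 := Vth5_rec hvV h0 h1
  have r2 := Vth5_rec hvV h1 h2
  have r3 := Vth5_rec hvV h2 h3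
  have hvs := (hsum5 v).symm.trans hvV.1
  have hD : 4*(Real.cos θ)^2 + 2*(Real.cos θ) - 1 = 0 := by
    by_contra hD0
    have hx2 : v (a 2) = 2*(Real.cos θ)*v (a 1) - v (a 0) := by linear_combination r1
    have hx3 : v (a 3) = 4*(Real.cos θ)^2*v (a 1) - 2*(Real.cos θ)*v (a 0) - v (a 1) := by
      linear_combination r2 + 2*(Real.cos θ)*r1
    have hx4 : v (a 4) = 8*(Real.cos θ)^3*v (a 1) - 4*(Real.cos θ)^2*v (a 0)
        - 4*(Real.cos θ)*v (a 1) + v (a 0) := by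
      linear_combination r3 + 2*(Real.cos θ)*r2 + (4*(Real.cos θ)^2 - 1)*r1
    have hA : (4*(Real.cos θ)^2 + 2*(Real.cos θ) - 1) * (2*(Real.cos θ)*v (a 1) - v (a 0)) = 0 := by
      linear_combination hvs - hx2 - hx3 - hx4
    have hB : (4*(Real.cos θ)^2 + 2*(Real.cos θ) - 1) * ((2*(Real.cos θ) - 1)*v (a 1) - v (a 0)) = 0 := by
      linear_combination r0 - hx4
    have hA' := (mul_eq_zero.1 hA).resolve_left hD0
    have hB' := (mul_eq_zero.1 hB).resolve_left hD0
    have hq : v (a 1) = 0 := by linarith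
    have hp : v (a 0) = 0 := by rw [hq] at hA'; linarith
    have hz2 : v (a 2) = 0 := by rw [hx2, hp, hq]; ring
    have hz3 : v (a 3) = 0 := by rw [hx3, hp, hq]; ring
    have hz4 : v (a 4) = 0 := by rw [hx4, hp, hq]; ring
    apply hv0
    funext i
    obtain ⟨t, rfl⟩ := hbij.2 i
    fin_cases t
    · exact hp
    · exact hq
    · exact hz2
    · exact hz3
    · exact hz4
  obtain ⟨heV, hregE⟩ := hregV
  have s1 := Vth5_rec heV h0 h1
  have s2 := Vth5_rec heV h1 h2
  have s3 := Vth5_rec heV h2 h3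
  have he2 : e (a 2) = 2*(Real.cos θ)*(e (a 1)) - e (a 0) := by linear_combination s1
  have he3 : e (a 3) = -(2*(Real.cos θ)*(e (a 0))) - 2*(Real.cos θ)*(e (a 1)) := by
    linear_combination s2 + 2*(Real.cos θ)*s1 + (e (a 1))*hD
  have he4 : e (a 4) = 2*(Real.cos θ)*(e (a 0)) - e (a 1) := by
    linear_combination s3 + 2*(Real.cos θ)*s2 + (4*(Real.cos θ)^2-1)*s1
      - (e (a 0) - (2*(Real.cos θ)-1)*(e (a 1)))*hD
  have hw : ∀ g : Fin 5 → ℝ, (g 0 + g 1 + g 2 + g 3 + g 4 = 0) →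
      (g 4 + g 1 = 2*(Real.cos θ)*(g 0)) → (g 0 + g 2 = 2*(Real.cos θ)*(g 1)) →
      (g 1 + g 3 = 2*(Real.cos θ)*(g 2)) → (g 2 + g 4 = 2*(Real.cos θ)*(g 3)) →
      (g 3 + g 0 = 2*(Real.cos θ)*(g 4)) →
      ∃ w ∈ Vth5 y θ, ∀ t : Fin 5, w (a t) = g t := by
    intro g hgs hr0 hr1 hr2 hr3 hr4
    have hval : ∀ u : Fin 5, (if a u = a 0 then g 0 else if a u = a 1 then g 1
        else if a u = a 2 then g 2 else if a u = a 3 then g 3 else g 4) = g u := by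
      intro u
      fin_cases u <;> simp [hinj.eq_iff]
    refine ⟨fun i => if i = a 0 then g 0 else if i = a 1 then g 1 else if i = a 2 then g 2
      else if i = a 3 then g 3 else g 4, ⟨?_, ?_⟩, hval⟩
    · rw [hsum5]
      rw [hval 0, hval 1, hval 2, hval 3, hval 4]
      linarith
    · funext i
      simp only [Pi.add_apply, Pi.smul_apply, smul_eq_mul]
      obtain ⟨t, rfl⟩ := hbij.2 i
      fin_cases t
      · show (if y.symm (a 0) = a 0 then g 0 else if y.symm (a 0) = a 1 then g 1 else if y.symm (a 0) = a 2 then g 2 else if y.symm (a 0) = a 3 then g 3 else g 4) + (if y (a 0) = a 0 then g 0 else if y (a 0) = a 1 then g 1 else if y (a 0) = a 2 then g 2 else if y (a 0) = a 3 then g 3 else g 4)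
            = 2 * Real.cos θ * (if a 0 = a 0 then g 0 else if a 0 = a 1 then g 1 else if a 0 = a 2 then g 2 else if a 0 = a 3 then g 3 else g 4)
        rw [hsymm0, h0, hval 4, hval 1, hval 0]
        linarith
      · show (if y.symm (a 1) = a 0 then g 0 else if y.symm (a 1) = a 1 then g 1 else if y.symm (a 1) = a 2 then g 2 else if y.symm (a 1) = a 3 then g 3 else g 4) + (if y (a 1) = a 0 then g 0 else if y (a 1) = a 1 then g 1 else if y (a 1) = a 2 then g 2 else if y (a 1) = a 3 then g 3 else g 4)
            = 2 * Real.cos θ * (if a 1 = a 0 then g 0 else if a 1 = a 1 then g 1 else if a 1 = a 2 then g 2 else if a 1 = a 3 then g 3 else g 4)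
        rw [hsymm1, h1, hval 0, hval 2, hval 1]
        linarith
      · show (if y.symm (a 2) = a 0 then g 0 else if y.symm (a 2) = a 1 then g 1 else if y.symm (a 2) = a 2 then g 2 else if y.symm (a 2) = a 3 then g 3 else g 4) + (if y (a 2) = a 0 then g 0 else if y (a 2) = a 1 then g 1 else if y (a 2) = a 2 then g 2 else if y (a 2) = a 3 then g 3 else g 4)
            = 2 * Real.cos θ * (if a 2 = a 0 then g 0 else if a 2 = a 1 then g 1 else if a 2 = a 2 then g 2 else if a 2 = a 3 then g 3 else g 4)
        rw [hsymm2, h2, hval 1, hval 3, hval 2]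
        linarith
      · show (if y.symm (a 3) = a 0 then g 0 else if y.symm (a 3) = a 1 then g 1 else if y.symm (a 3) = a 2 then g 2 else if y.symm (a 3) = a 3 then g 3 else g 4) + (if y (a 3) = a 0 then g 0 else if y (a 3) = a 1 then g 1 else if y (a 3) = a 2 then g 2 else if y (a 3) = a 3 then g 3 else g 4)
            = 2 * Real.cos θ * (if a 3 = a 0 then g 0 else if a 3 = a 1 then g 1 else if a 3 = a 2 then g 2 else if a 3 = a 3 then g 3 else g 4)
        rw [hsymm3, h3, hval 2, hval 4, hval 3]
        linarith
      · show (if y.symm (a 4) = a 0 then g 0 else if y.symm (a 4) = a 1 then g 1 else if y.symm (a 4) = a 2 then g 2 else if y.symm (a 4) = a 3 then g 3 else g 4) + (if y (a 4) = a 0 then g 0 else if y (a 4) = a 1 then g 1 else if y (a 4) = a 2 then g 2 else if y (a 4) = a 3 then g 3 else g 4)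
            = 2 * Real.cos θ * (if a 4 = a 0 then g 0 else if a 4 = a 1 then g 1 else if a 4 = a 2 then g 2 else if a 4 = a 3 then g 3 else g 4)
        rw [hsymm4, h4, hval 3, hval 0, hval 4]
        linarith
  obtain ⟨w1, hw1V, hw1a⟩ := hw
    (fun t => if t = 0 then 1 else if t = 1 then 0 else if t = 2 then -1
      else if t = 3 then -(2*(Real.cos θ)) else 2*(Real.cos θ))
    (by simp) (by simp) (by simp) (by simp)
    (by simp; linear_combination hD) (by simp; linear_combination -hD)
  obtain ⟨w2, hw2V, hw2a⟩ := hw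
    (fun t => if t = 0 then 0 else if t = 1 then 1 else if t = 2 then 2*(Real.cos θ)
      else if t = 3 then -(2*(Real.cos θ)) else -1)
    (by simp) (by simp) (by simp)
    (by simp; linear_combination -hD) (by simp; linear_combination hD) (by simp)
  have hepair : ∀ s t : Fin 5, e (a s) = e (a t) → s = t := by
    intro s t heq
    have G1 := ((hw1a s).symm.trans ((hregE (a s) (a t) heq _ hw1V).trans (hw1a t)))
    have G2 := ((hw2a s).symm.trans ((hregE (a s) (a t) heq _ hw2V).trans (hw2a t)))
    by_contra hst
    fin_cases s <;> fin_cases t <;> simp at G1 G2 hst ⊢ <;>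
      nlinarith [hD, G1, G2, sq_nonneg (Real.cos θ)]
  have hfa : ∀ u : Fin 5, e (a u) = fA (Real.cos θ) (e (a 0)) (e (a 1)) u := by
    intro u
    fin_cases u
    · rfl
    · rfl
    · exact he2
    · exact he3
    · exact he4
  refine ⟨Real.cos θ, e (a 0), e (a 1), hD, fun s t hst => ?_⟩
  rw [← hfa s, ← hfa t]
  refine lt_of_le_of_ne (hdom (a s) (a t) hst.le) ?_
  intro h
  exact absurd (congrArg a (hepair t s h)) hst.ne'

def xA : Equiv.Perm (Fin 5) :=
  Equiv.swap 1 2 * Equiv.swap 2 3 * Equiv.swap 3 4 * Equiv.swap 0 1 *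
    Equiv.swap 1 2 * Equiv.swap 2 3

def badT : List (Fin 5 × Fin 5 × Fin 5 × Fin 5 × Fin 5) :=
  [(1,3,4,2,0), (1,4,3,0,2), (2,3,1,4,0), (2,3,4,0,1), (2,4,1,0,3), (3,0,4,2,1), (3,2,0,4,1), (3,4,0,1,2), (4,0,3,1,2), (4,2,0,1,3)]

set_option maxHeartbeats 2000000 in
set_option maxRecDepth 100000 in
lemma bullet4 (yy : Equiv.Perm (Fin 5)) (hcj : IsConj xA yy) (hg : GoodPosElem yy) :
    lenA yy = 4 ∨ lenA yy = 8 := by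
  obtain ⟨g, hgx⟩ := isConj_iff.1 hcj
  by_cases h48 : lenA yy = 4 ∨ lenA yy = 8
  · exact h48
  exfalso
  have key : ∀ g : Equiv.Perm (Fin 5), lenA (g*xA*g⁻¹) = 4 ∨ lenA (g*xA*g⁻¹) = 8 ∨
      ((g*xA*g⁻¹) 0, (g*xA*g⁻¹) 1, (g*xA*g⁻¹) 2, (g*xA*g⁻¹) 3, (g*xA*g⁻¹) 4) ∈ badT := by
    decide
  have hkey := key g
  rw [hgx] at hkey
  rcases hkey with h | h | h
  · exact h48 (Or.inl h)
  · exact h48 (Or.inr h)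
  simp only [badT, List.mem_cons, List.not_mem_nil, or_false, Prod.mk.injEq] at h
  rcases h with h|h|h|h|h|h|h|h|h|h
  · obtain ⟨hy0, hy1, hy2, hy3, hy4⟩ := h
    obtain ⟨c, p, q, hD, hch⟩ := core yy (![0,1,3,2,4] : Fin 5 → Fin 5) (by decide)
      hy0 hy1 hy3 hy2 hy4 hg
    have q0 := hch 0 1 (by decide)
    have q1 := hch 1 3 (by decide)
    have q2 := hch 3 2 (by decide)
    have q3 := hch 2 4 (by decide)
    simp only [fA0, fA1, fA2, fA3, fA4] at q0 q1 q2 q3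
    have hc0 : c ≠ 0 := fun h0 => by rw [h0] at hD; norm_num at hD
    have hDp : (4*c^2 + 2*c - 1) * p = 0 := by rw [hD]; ring
    have hDq : (4*c^2 + 2*c - 1) * q = 0 := by rw [hD]; ring
    rcases hc0.lt_or_gt with hc | hc
    · have hb1 : 0 < -c := by linarith
      have hb2 : 0 < -1 - 2*c := by nlinarith [hD, hc]
      have hb3 : 0 < 1 + c := by nlinarith [hD, hc]
      linarith [q0, q1, q2, q3, mul_pos hb1 (sub_pos.2 q0), mul_pos hb1 (sub_pos.2 q1), mul_pos hb1 (sub_pos.2 q2), mul_pos hb1 (sub_pos.2 q3), mul_pos hb2 (sub_pos.2 q0), mul_pos hb2 (sub_pos.2 q1), mul_pos hb2 (sub_pos.2 q2), mul_pos hb2 (sub_pos.2 q3), mul_pos hb3 (sub_pos.2 q0), mul_pos hb3 (sub_pos.2 q1), mul_pos hb3 (sub_pos.2 q2), mul_pos hb3 (sub_pos.2 q3), hDp, hDq]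
    · have hb1 : 0 < 1 - 2*c := by nlinarith [hD, mul_pos hc hc]
      linarith [q0, q1, q2, q3, mul_pos hc (sub_pos.2 q0), mul_pos hc (sub_pos.2 q1), mul_pos hc (sub_pos.2 q2), mul_pos hc (sub_pos.2 q3), mul_pos hb1 (sub_pos.2 q0), mul_pos hb1 (sub_pos.2 q1), mul_pos hb1 (sub_pos.2 q2), mul_pos hb1 (sub_pos.2 q3), hDp, hDq]
  · obtain ⟨hy0, hy1, hy2, hy3, hy4⟩ := h
    obtain ⟨c, p, q, hD, hch⟩ := core yy (![0,1,4,2,3] : Fin 5 → Fin 5) (by decide)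
      hy0 hy1 hy4 hy2 hy3 hg
    have q0 := hch 0 1 (by decide)
    have q1 := hch 1 3 (by decide)
    have q2 := hch 3 4 (by decide)
    have q3 := hch 4 2 (by decide)
    simp only [fA0, fA1, fA2, fA3, fA4] at q0 q1 q2 q3
    have hc0 : c ≠ 0 := fun h0 => by rw [h0] at hD; norm_num at hD
    have hDp : (4*c^2 + 2*c - 1) * p = 0 := by rw [hD]; ring
    have hDq : (4*c^2 + 2*c - 1) * q = 0 := by rw [hD]; ring
    rcases hc0.lt_or_gt with hc | hc
    · have hb1 : 0 < -c := by linarith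
      have hb2 : 0 < -1 - 2*c := by nlinarith [hD, hc]
      have hb3 : 0 < 1 + c := by nlinarith [hD, hc]
      linarith [q0, q1, q2, q3, mul_pos hb1 (sub_pos.2 q0), mul_pos hb1 (sub_pos.2 q1), mul_pos hb1 (sub_pos.2 q2), mul_pos hb1 (sub_pos.2 q3), mul_pos hb2 (sub_pos.2 q0), mul_pos hb2 (sub_pos.2 q1), mul_pos hb2 (sub_pos.2 q2), mul_pos hb2 (sub_pos.2 q3), mul_pos hb3 (sub_pos.2 q0), mul_pos hb3 (sub_pos.2 q1), mul_pos hb3 (sub_pos.2 q2), mul_pos hb3 (sub_pos.2 q3), hDp, hDq]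
    · have hb1 : 0 < 1 - 2*c := by nlinarith [hD, mul_pos hc hc]
      linarith [q0, q1, q2, q3, mul_pos hc (sub_pos.2 q0), mul_pos hc (sub_pos.2 q1), mul_pos hc (sub_pos.2 q2), mul_pos hc (sub_pos.2 q3), mul_pos hb1 (sub_pos.2 q0), mul_pos hb1 (sub_pos.2 q1), mul_pos hb1 (sub_pos.2 q2), mul_pos hb1 (sub_pos.2 q3), hDp, hDq]
  · obtain ⟨hy0, hy1, hy2, hy3, hy4⟩ := h
    obtain ⟨c, p, q, hD, hch⟩ := core yy (![0,2,1,3,4] : Fin 5 → Fin 5) (by decide)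
      hy0 hy2 hy1 hy3 hy4 hg
    have q0 := hch 0 2 (by decide)
    have q1 := hch 2 1 (by decide)
    have q2 := hch 1 3 (by decide)
    have q3 := hch 3 4 (by decide)
    simp only [fA0, fA1, fA2, fA3, fA4] at q0 q1 q2 q3
    have hc0 : c ≠ 0 := fun h0 => by rw [h0] at hD; norm_num at hD
    have hDp : (4*c^2 + 2*c - 1) * p = 0 := by rw [hD]; ring
    have hDq : (4*c^2 + 2*c - 1) * q = 0 := by rw [hD]; ring
    rcases hc0.lt_or_gt with hc | hc
    · have hb1 : 0 < -c := by linarith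
      have hb2 : 0 < -1 - 2*c := by nlinarith [hD, hc]
      have hb3 : 0 < 1 + c := by nlinarith [hD, hc]
      linarith [q0, q1, q2, q3, mul_pos hb1 (sub_pos.2 q0), mul_pos hb1 (sub_pos.2 q1), mul_pos hb1 (sub_pos.2 q2), mul_pos hb1 (sub_pos.2 q3), mul_pos hb2 (sub_pos.2 q0), mul_pos hb2 (sub_pos.2 q1), mul_pos hb2 (sub_pos.2 q2), mul_pos hb2 (sub_pos.2 q3), mul_pos hb3 (sub_pos.2 q0), mul_pos hb3 (sub_pos.2 q1), mul_pos hb3 (sub_pos.2 q2), mul_pos hb3 (sub_pos.2 q3), hDp, hDq]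
    · have hb1 : 0 < 1 - 2*c := by nlinarith [hD, mul_pos hc hc]
      linarith [q0, q1, q2, q3, mul_pos hc (sub_pos.2 q0), mul_pos hc (sub_pos.2 q1), mul_pos hc (sub_pos.2 q2), mul_pos hc (sub_pos.2 q3), mul_pos hb1 (sub_pos.2 q0), mul_pos hb1 (sub_pos.2 q1), mul_pos hb1 (sub_pos.2 q2), mul_pos hb1 (sub_pos.2 q3), hDp, hDq]
  · obtain ⟨hy0, hy1, hy2, hy3, hy4⟩ := h
    obtain ⟨c, p, q, hD, hch⟩ := core yy (![0,2,4,1,3] : Fin 5 → Fin 5) (by decide)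
      hy0 hy2 hy4 hy1 hy3 hg
    have q0 := hch 0 3 (by decide)
    have q1 := hch 3 1 (by decide)
    have q2 := hch 1 4 (by decide)
    have q3 := hch 4 2 (by decide)
    simp only [fA0, fA1, fA2, fA3, fA4] at q0 q1 q2 q3
    have hc0 : c ≠ 0 := fun h0 => by rw [h0] at hD; norm_num at hD
    have hDp : (4*c^2 + 2*c - 1) * p = 0 := by rw [hD]; ring
    have hDq : (4*c^2 + 2*c - 1) * q = 0 := by rw [hD]; ring
    rcases hc0.lt_or_gt with hc | hc
    · have hb1 : 0 < -c := by linarith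
      have hb2 : 0 < -1 - 2*c := by nlinarith [hD, hc]
      have hb3 : 0 < 1 + c := by nlinarith [hD, hc]
      linarith [q0, q1, q2, q3, mul_pos hb1 (sub_pos.2 q0), mul_pos hb1 (sub_pos.2 q1), mul_pos hb1 (sub_pos.2 q2), mul_pos hb1 (sub_pos.2 q3), mul_pos hb2 (sub_pos.2 q0), mul_pos hb2 (sub_pos.2 q1), mul_pos hb2 (sub_pos.2 q2), mul_pos hb2 (sub_pos.2 q3), mul_pos hb3 (sub_pos.2 q0), mul_pos hb3 (sub_pos.2 q1), mul_pos hb3 (sub_pos.2 q2), mul_pos hb3 (sub_pos.2 q3), hDp, hDq]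
    · have hb1 : 0 < 1 - 2*c := by nlinarith [hD, mul_pos hc hc]
      linarith [q0, q1, q2, q3, mul_pos hc (sub_pos.2 q0), mul_pos hc (sub_pos.2 q1), mul_pos hc (sub_pos.2 q2), mul_pos hc (sub_pos.2 q3), mul_pos hb1 (sub_pos.2 q0), mul_pos hb1 (sub_pos.2 q1), mul_pos hb1 (sub_pos.2 q2), mul_pos hb1 (sub_pos.2 q3), hDp, hDq]
  · obtain ⟨hy0, hy1, hy2, hy3, hy4⟩ := h
    obtain ⟨c, p, q, hD, hch⟩ := core yy (![0,2,1,4,3] : Fin 5 → Fin 5) (by decide)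
      hy0 hy2 hy1 hy4 hy3 hg
    have q0 := hch 0 2 (by decide)
    have q1 := hch 2 1 (by decide)
    have q2 := hch 1 4 (by decide)
    have q3 := hch 4 3 (by decide)
    simp only [fA0, fA1, fA2, fA3, fA4] at q0 q1 q2 q3
    have hc0 : c ≠ 0 := fun h0 => by rw [h0] at hD; norm_num at hD
    have hDp : (4*c^2 + 2*c - 1) * p = 0 := by rw [hD]; ring
    have hDq : (4*c^2 + 2*c - 1) * q = 0 := by rw [hD]; ring
    rcases hc0.lt_or_gt with hc | hc
    · have hb1 : 0 < -c := by linarith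
      have hb2 : 0 < -1 - 2*c := by nlinarith [hD, hc]
      have hb3 : 0 < 1 + c := by nlinarith [hD, hc]
      linarith [q0, q1, q2, q3, mul_pos hb1 (sub_pos.2 q0), mul_pos hb1 (sub_pos.2 q1), mul_pos hb1 (sub_pos.2 q2), mul_pos hb1 (sub_pos.2 q3), mul_pos hb2 (sub_pos.2 q0), mul_pos hb2 (sub_pos.2 q1), mul_pos hb2 (sub_pos.2 q2), mul_pos hb2 (sub_pos.2 q3), mul_pos hb3 (sub_pos.2 q0), mul_pos hb3 (sub_pos.2 q1), mul_pos hb3 (sub_pos.2 q2), mul_pos hb3 (sub_pos.2 q3), hDp, hDq]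
    · have hb1 : 0 < 1 - 2*c := by nlinarith [hD, mul_pos hc hc]
      linarith [q0, q1, q2, q3, mul_pos hc (sub_pos.2 q0), mul_pos hc (sub_pos.2 q1), mul_pos hc (sub_pos.2 q2), mul_pos hc (sub_pos.2 q3), mul_pos hb1 (sub_pos.2 q0), mul_pos hb1 (sub_pos.2 q1), mul_pos hb1 (sub_pos.2 q2), mul_pos hb1 (sub_pos.2 q3), hDp, hDq]
  · obtain ⟨hy0, hy1, hy2, hy3, hy4⟩ := h
    obtain ⟨c, p, q, hD, hch⟩ := core yy (![0,3,2,4,1] : Fin 5 → Fin 5) (by decide)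
      hy0 hy3 hy2 hy4 hy1 hg
    have q0 := hch 0 4 (by decide)
    have q1 := hch 4 2 (by decide)
    have q2 := hch 2 1 (by decide)
    have q3 := hch 1 3 (by decide)
    simp only [fA0, fA1, fA2, fA3, fA4] at q0 q1 q2 q3
    have hc0 : c ≠ 0 := fun h0 => by rw [h0] at hD; norm_num at hD
    have hDp : (4*c^2 + 2*c - 1) * p = 0 := by rw [hD]; ring
    have hDq : (4*c^2 + 2*c - 1) * q = 0 := by rw [hD]; ring
    rcases hc0.lt_or_gt with hc | hc
    · have hb1 : 0 < -c := by linarith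
      have hb2 : 0 < -1 - 2*c := by nlinarith [hD, hc]
      have hb3 : 0 < 1 + c := by nlinarith [hD, hc]
      linarith [q0, q1, q2, q3, mul_pos hb1 (sub_pos.2 q0), mul_pos hb1 (sub_pos.2 q1), mul_pos hb1 (sub_pos.2 q2), mul_pos hb1 (sub_pos.2 q3), mul_pos hb2 (sub_pos.2 q0), mul_pos hb2 (sub_pos.2 q1), mul_pos hb2 (sub_pos.2 q2), mul_pos hb2 (sub_pos.2 q3), mul_pos hb3 (sub_pos.2 q0), mul_pos hb3 (sub_pos.2 q1), mul_pos hb3 (sub_pos.2 q2), mul_pos hb3 (sub_pos.2 q3), hDp, hDq]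
    · have hb1 : 0 < 1 - 2*c := by nlinarith [hD, mul_pos hc hc]
      linarith [q0, q1, q2, q3, mul_pos hc (sub_pos.2 q0), mul_pos hc (sub_pos.2 q1), mul_pos hc (sub_pos.2 q2), mul_pos hc (sub_pos.2 q3), mul_pos hb1 (sub_pos.2 q0), mul_pos hb1 (sub_pos.2 q1), mul_pos hb1 (sub_pos.2 q2), mul_pos hb1 (sub_pos.2 q3), hDp, hDq]
  · obtain ⟨hy0, hy1, hy2, hy3, hy4⟩ := h
    obtain ⟨c, p, q, hD, hch⟩ := core yy (![0,3,4,1,2] : Fin 5 → Fin 5) (by decide)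
      hy0 hy3 hy4 hy1 hy2 hg
    have q0 := hch 0 3 (by decide)
    have q1 := hch 3 4 (by decide)
    have q2 := hch 4 1 (by decide)
    have q3 := hch 1 2 (by decide)
    simp only [fA0, fA1, fA2, fA3, fA4] at q0 q1 q2 q3
    have hc0 : c ≠ 0 := fun h0 => by rw [h0] at hD; norm_num at hD
    have hDp : (4*c^2 + 2*c - 1) * p = 0 := by rw [hD]; ring
    have hDq : (4*c^2 + 2*c - 1) * q = 0 := by rw [hD]; ring
    rcases hc0.lt_or_gt with hc | hc
    · have hb1 : 0 < -c := by linarith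
      have hb2 : 0 < -1 - 2*c := by nlinarith [hD, hc]
      have hb3 : 0 < 1 + c := by nlinarith [hD, hc]
      linarith [q0, q1, q2, q3, mul_pos hb1 (sub_pos.2 q0), mul_pos hb1 (sub_pos.2 q1), mul_pos hb1 (sub_pos.2 q2), mul_pos hb1 (sub_pos.2 q3), mul_pos hb2 (sub_pos.2 q0), mul_pos hb2 (sub_pos.2 q1), mul_pos hb2 (sub_pos.2 q2), mul_pos hb2 (sub_pos.2 q3), mul_pos hb3 (sub_pos.2 q0), mul_pos hb3 (sub_pos.2 q1), mul_pos hb3 (sub_pos.2 q2), mul_pos hb3 (sub_pos.2 q3), hDp, hDq]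
    · have hb1 : 0 < 1 - 2*c := by nlinarith [hD, mul_pos hc hc]
      linarith [q0, q1, q2, q3, mul_pos hc (sub_pos.2 q0), mul_pos hc (sub_pos.2 q1), mul_pos hc (sub_pos.2 q2), mul_pos hc (sub_pos.2 q3), mul_pos hb1 (sub_pos.2 q0), mul_pos hb1 (sub_pos.2 q1), mul_pos hb1 (sub_pos.2 q2), mul_pos hb1 (sub_pos.2 q3), hDp, hDq]
  · obtain ⟨hy0, hy1, hy2, hy3, hy4⟩ := h
    obtain ⟨c, p, q, hD, hch⟩ := core yy (![0,3,1,4,2] : Fin 5 → Fin 5) (by decide)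
      hy0 hy3 hy1 hy4 hy2 hg
    have q0 := hch 0 2 (by decide)
    have q1 := hch 2 4 (by decide)
    have q2 := hch 4 1 (by decide)
    have q3 := hch 1 3 (by decide)
    simp only [fA0, fA1, fA2, fA3, fA4] at q0 q1 q2 q3
    have hc0 : c ≠ 0 := fun h0 => by rw [h0] at hD; norm_num at hD
    have hDp : (4*c^2 + 2*c - 1) * p = 0 := by rw [hD]; ring
    have hDq : (4*c^2 + 2*c - 1) * q = 0 := by rw [hD]; ring
    rcases hc0.lt_or_gt with hc | hc
    · have hb1 : 0 < -c := by linarith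
      have hb2 : 0 < -1 - 2*c := by nlinarith [hD, hc]
      have hb3 : 0 < 1 + c := by nlinarith [hD, hc]
      linarith [q0, q1, q2, q3, mul_pos hb1 (sub_pos.2 q0), mul_pos hb1 (sub_pos.2 q1), mul_pos hb1 (sub_pos.2 q2), mul_pos hb1 (sub_pos.2 q3), mul_pos hb2 (sub_pos.2 q0), mul_pos hb2 (sub_pos.2 q1), mul_pos hb2 (sub_pos.2 q2), mul_pos hb2 (sub_pos.2 q3), mul_pos hb3 (sub_pos.2 q0), mul_pos hb3 (sub_pos.2 q1), mul_pos hb3 (sub_pos.2 q2), mul_pos hb3 (sub_pos.2 q3), hDp, hDq]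
    · have hb1 : 0 < 1 - 2*c := by nlinarith [hD, mul_pos hc hc]
      linarith [q0, q1, q2, q3, mul_pos hc (sub_pos.2 q0), mul_pos hc (sub_pos.2 q1), mul_pos hc (sub_pos.2 q2), mul_pos hc (sub_pos.2 q3), mul_pos hb1 (sub_pos.2 q0), mul_pos hb1 (sub_pos.2 q1), mul_pos hb1 (sub_pos.2 q2), mul_pos hb1 (sub_pos.2 q3), hDp, hDq]
  · obtain ⟨hy0, hy1, hy2, hy3, hy4⟩ := h
    obtain ⟨c, p, q, hD, hch⟩ := core yy (![0,4,2,3,1] : Fin 5 → Fin 5) (by decide)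
      hy0 hy4 hy2 hy3 hy1 hg
    have q0 := hch 0 4 (by decide)
    have q1 := hch 4 2 (by decide)
    have q2 := hch 2 3 (by decide)
    have q3 := hch 3 1 (by decide)
    simp only [fA0, fA1, fA2, fA3, fA4] at q0 q1 q2 q3
    have hc0 : c ≠ 0 := fun h0 => by rw [h0] at hD; norm_num at hD
    have hDp : (4*c^2 + 2*c - 1) * p = 0 := by rw [hD]; ring
    have hDq : (4*c^2 + 2*c - 1) * q = 0 := by rw [hD]; ring
    rcases hc0.lt_or_gt with hc | hc
    · have hb1 : 0 < -c := by linarith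
      have hb2 : 0 < -1 - 2*c := by nlinarith [hD, hc]
      have hb3 : 0 < 1 + c := by nlinarith [hD, hc]
      linarith [q0, q1, q2, q3, mul_pos hb1 (sub_pos.2 q0), mul_pos hb1 (sub_pos.2 q1), mul_pos hb1 (sub_pos.2 q2), mul_pos hb1 (sub_pos.2 q3), mul_pos hb2 (sub_pos.2 q0), mul_pos hb2 (sub_pos.2 q1), mul_pos hb2 (sub_pos.2 q2), mul_pos hb2 (sub_pos.2 q3), mul_pos hb3 (sub_pos.2 q0), mul_pos hb3 (sub_pos.2 q1), mul_pos hb3 (sub_pos.2 q2), mul_pos hb3 (sub_pos.2 q3), hDp, hDq]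
    · have hb1 : 0 < 1 - 2*c := by nlinarith [hD, mul_pos hc hc]
      linarith [q0, q1, q2, q3, mul_pos hc (sub_pos.2 q0), mul_pos hc (sub_pos.2 q1), mul_pos hc (sub_pos.2 q2), mul_pos hc (sub_pos.2 q3), mul_pos hb1 (sub_pos.2 q0), mul_pos hb1 (sub_pos.2 q1), mul_pos hb1 (sub_pos.2 q2), mul_pos hb1 (sub_pos.2 q3), hDp, hDq]
  · obtain ⟨hy0, hy1, hy2, hy3, hy4⟩ := h
    obtain ⟨c, p, q, hD, hch⟩ := core yy (![0,4,3,1,2] : Fin 5 → Fin 5) (by decide)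
      hy0 hy4 hy3 hy1 hy2 hg
    have q0 := hch 0 3 (by decide)
    have q1 := hch 3 4 (by decide)
    have q2 := hch 4 2 (by decide)
    have q3 := hch 2 1 (by decide)
    simp only [fA0, fA1, fA2, fA3, fA4] at q0 q1 q2 q3
    have hc0 : c ≠ 0 := fun h0 => by rw [h0] at hD; norm_num at hD
    have hDp : (4*c^2 + 2*c - 1) * p = 0 := by rw [hD]; ring
    have hDq : (4*c^2 + 2*c - 1) * q = 0 := by rw [hD]; ring
    rcases hc0.lt_or_gt with hc | hc
    · have hb1 : 0 < -c := by linarith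
      have hb2 : 0 < -1 - 2*c := by nlinarith [hD, hc]
      have hb3 : 0 < 1 + c := by nlinarith [hD, hc]
      linarith [q0, q1, q2, q3, mul_pos hb1 (sub_pos.2 q0), mul_pos hb1 (sub_pos.2 q1), mul_pos hb1 (sub_pos.2 q2), mul_pos hb1 (sub_pos.2 q3), mul_pos hb2 (sub_pos.2 q0), mul_pos hb2 (sub_pos.2 q1), mul_pos hb2 (sub_pos.2 q2), mul_pos hb2 (sub_pos.2 q3), mul_pos hb3 (sub_pos.2 q0), mul_pos hb3 (sub_pos.2 q1), mul_pos hb3 (sub_pos.2 q2), mul_pos hb3 (sub_pos.2 q3), hDp, hDq]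
    · have hb1 : 0 < 1 - 2*c := by nlinarith [hD, mul_pos hc hc]
      linarith [q0, q1, q2, q3, mul_pos hc (sub_pos.2 q0), mul_pos hc (sub_pos.2 q1), mul_pos hc (sub_pos.2 q2), mul_pos hc (sub_pos.2 q3), mul_pos hb1 (sub_pos.2 q0), mul_pos hb1 (sub_pos.2 q1), mul_pos hb1 (sub_pos.2 q2), mul_pos hb1 (sub_pos.2 q3), hDp, hDq]

lemma nA_triple (x : Equiv.Perm (Fin 5)) (N : Fin 5 → Fin 5 → ℕ)
    (hmem : ∀ i j : Fin 5, i < j → 1 ≤ N i j ∧ (x ^ (N i j)) j < (x ^ (N i j)) i)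
    (hmin : ∀ i j : Fin 5, i < j → ∀ m, m < N i j → ¬(1 ≤ m ∧ (x ^ m) j < (x ^ m) i))
    (hN : ∀ i j k : Fin 5, i < j → j < k → N i k ≤ max (N i j) (N j k)) :
    ∀ i j k : Fin 5, i < j → j < k → nA x i k ≤ max (nA x i j) (nA x j k) := by
  intro i j k hij hjk
  have key : ∀ a b : Fin 5, a < b → nA x a b = N a b := by
    intro a b hab
    refine le_antisymm (Nat.sInf_le (hmem a b hab)) ?_
    refine le_csInf ⟨_, hmem a b hab⟩ (fun m hm => ?_)
    exact le_of_not_gt fun hlt => hmin a b hab m hlt hm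
  rw [key i k (hij.trans hjk), key i j hij, key j k hjk]
  exact hN i j k hij hjk

lemma phi_empty (z : Equiv.Perm (Fin 5))
    (key : ∀ p : Fin 5 × Fin 5, p.1 ≠ p.2 →
      ¬(∀ k ∈ ({1,2,3,4} : Finset ℤ), ((z^k) p.1 < (z^k) p.2 ↔ p.1 < p.2))) :
    PhiXA z = ∅ := by
  ext p
  simp only [Set.mem_empty_iff_false, iff_false]
  rintro ⟨hne, h⟩
  exact key p hne (fun k _ => h k)

lemma emptyJ : {p : Fin 5 × Fin 5 | p.1 ≠ p.2 ∧ InZJ ∅ p} = (∅ : Set (Fin 5 × Fin 5)) := by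
  ext p
  simp only [Set.mem_setOf_eq, Set.mem_empty_iff_false, iff_false]
  rintro ⟨hne, hz⟩
  have hv : p.1.val ≠ p.2.val := fun hv => hne (Fin.eq_of_val_eq hv)
  exact Set.notMem_empty _ (hz (min p.1.val p.2.val) le_rfl (by omega))

lemma step_len : ∀ u v : Equiv.Perm (Fin 5), Relation.ReflTransGen StepTo u v →
    lenA v ≤ lenA u := by
  intro u v h
  induction h with
  | refl => exact le_refl _
  | tail _ hstep ih =>
    obtain ⟨i, _, hlen⟩ := hstep
    exact hlen.trans ih

lemma step_conj : ∀ u v : Equiv.Perm (Fin 5), Relation.ReflTransGen StepTo u v →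
    IsConj u v := by
  intro u v h
  induction h with
  | refl => exact IsConj.refl _
  | tail _ hstep ih =>
    obtain ⟨i, he, _⟩ := hstep
    refine ih.trans (isConj_iff.2 ⟨sref i, ?_⟩)
    rw [he]
    simp [sref, Equiv.swap_inv]
/-- in type `A₄`, `x = s₂s₃s₄s₁s₂s₃` is convex with
`Φ(x) = ∅` and `ℓ(x) = 6`; every good position element in the Coxeter
conjugacy class has length `4` or `8`; hence `x` is not a cyclic shift of any
good position element. -/
theorem a4_convex_not_good_position :
    let x : Equiv.Perm (Fin 5) :=
      Equiv.swap 1 2 * Equiv.swap 2 3 * Equiv.swap 3 4 * Equiv.swap 0 1 *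
        Equiv.swap 1 2 * Equiv.swap 2 3
    ConvexA x ∧ PhiXA x = ∅ ∧ lenA x = 6 ∧
      (∀ y : Equiv.Perm (Fin 5), IsConj x y → GoodPosElem y →
        lenA y = 4 ∨ lenA y = 8) ∧
      ¬ ∃ y : Equiv.Perm (Fin 5), GoodPosElem y ∧
        Relation.ReflTransGen StepTo y x ∧ Relation.ReflTransGen StepTo x y := by
  intro x
  show ConvexA xA ∧ PhiXA xA = ∅ ∧ lenA xA = 6 ∧
      (∀ y : Equiv.Perm (Fin 5), IsConj xA y → GoodPosElem y →
        lenA y = 4 ∨ lenA y = 8) ∧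
      ¬ ∃ y : Equiv.Perm (Fin 5), GoodPosElem y ∧
        Relation.ReflTransGen StepTo y xA ∧ Relation.ReflTransGen StepTo xA y
  have hkeyx : ∀ p : Fin 5 × Fin 5, p.1 ≠ p.2 →
      ¬(∀ k ∈ ({1,2,3,4} : Finset ℤ), ((xA^k) p.1 < (xA^k) p.2 ↔ p.1 < p.2)) := by decide
  have hkeyxi : ∀ p : Fin 5 × Fin 5, p.1 ≠ p.2 →
      ¬(∀ k ∈ ({1,2,3,4} : Finset ℤ), ((xA⁻¹^k) p.1 < (xA⁻¹^k) p.2 ↔ p.1 < p.2)) := by decide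
  have hphix : PhiXA xA = ∅ := phi_empty xA hkeyx
  have hphixi : PhiXA xA⁻¹ = ∅ := phi_empty xA⁻¹ hkeyxi
  have hlen6 : lenA xA = 6 := by decide
  refine ⟨⟨⟨⟨∅, by rw [hphix, emptyJ]⟩, ?_⟩, ⟨∅, by rw [hphixi, emptyJ]⟩, ?_⟩,
    hphix, hlen6, fun y hc hg => bullet4 y hc hg, ?_⟩
  · intro i j k hij hjk _ _ _
    exact nA_triple xA
      (fun i j => ![![0,2,2,1,1],![0,0,4,1,1],![0,0,0,1,1],![0,0,0,0,3],![0,0,0,0,0]] i j)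
      (by decide) (by decide) (by decide) i j k hij hjk
  · intro i j k hij hjk _ _ _
    exact nA_triple xA⁻¹
      (fun i j => ![![0,3,1,1,1],![0,0,1,1,1],![0,0,0,4,2],![0,0,0,0,2],![0,0,0,0,0]] i j)
      (by decide) (by decide) (by decide) i j k hij hjk
  · rintro ⟨y, hgy, hyx, hxy⟩
    have h2 : lenA y ≤ lenA xA := step_len xA y hxy
    have h1 : lenA xA ≤ lenA y := step_len y xA hyx
    have hcj : IsConj xA y := step_conj xA y hxy
    have h48 := bullet4 y hcj hgy
    omega
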